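/- (Theorem 3) Let t be a real number with |t| < 1. For m ≥ 1 let A_n^{(m)}(t) denote the n-th derivative at x = 0 of the function x ↦ ((1-t)/(e^{x(t-1)} - t))^m. Then for all n, N ∈ ℕ, the series Σ_{j=0}^{∞} t^j (j+1)^{n+N} converges and equals (1-t)^{-n} · Σ_{i=1}^{N+1} a_{i-1}(N, t) · (1-t)^{-i} · A_n^{(i)}(t). -/

import Mathlib

/-- The coefficients `a i N t` defined by `a 0 N t = 1` and, for `1 ≤ i ≤ N`,
`a i N t = i * t * ∑_{j=0}^{N-i} (i+1)^j * a (i-1) (N-j-1) t`. -/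
noncomputable def eulerianCoeff : ℕ → ℕ → ℝ → ℝ
  | 0, _, _ => 1
  | (i + 1), N, t =>
      ((i : ℝ) + 1) * t *
        ∑ j ∈ Finset.range (N - (i + 1) + 1),
          ((i : ℝ) + 2) ^ j * eulerianCoeff i (N - j - 1) t

/-- `higherEulerian t m n` is the `n`-th Eulerian polynomial of order `m`, evaluated at `t`,
defined as the `n`-th derivative at `x = 0` of `x ↦ ((1-t)/(e^{x(t-1)} - t))^m`. -/
noncomputable def higherEulerian (t : ℝ) (m n : ℕ) : ℝ :=
  iteratedDeriv n (fun x : ℝ => ((1 - t) / (Real.exp (x * (t - 1)) - t)) ^ m) 0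

/-!
The function `f x = (1 - t) / (e^{x(t-1)} - t)` satisfies the Riccati equation
`f' = (1 - t) f + t f²`, so `B_m(n) = (1 - t)^{-(n+m)} A_n^{(m)}(t)` obeys
`B_{m+1}(n+1) = (m+1) (B_{m+1}(n) + t B_{m+2}(n))` with `B_m(0) = (1 - t)^{-m}`.
For `|t| < 1` the series `∑_j C(j+m, m) t^j (j+m+1)^n` satisfy the same recurrence (Pascal's rule
after shifting the index by one) and start from the negative binomial series, so they sum to
`B_{m+1}(n)`. The recurrence defining `a_i(N, t)` is exactly what is needed to unfold
`B_1(n+N)` `N` times into `∑_i a_{i-1}(N, t) B_i(n)`.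
-/

open Finset Filter Topology

noncomputable def eulerianGenFun (t x : ℝ) : ℝ := (1 - t) / (Real.exp (x * (t - 1)) - t)

section GeneratingFunction

variable {t : ℝ}

theorem hasDerivAt_eulerianGenFun {x : ℝ} (hx : Real.exp (x * (t - 1)) - t ≠ 0) :
    HasDerivAt (eulerianGenFun t)
      ((1 - t) * eulerianGenFun t x + t * eulerianGenFun t x ^ 2) x := by
  have hexp : HasDerivAt (fun y => Real.exp (y * (t - 1)) - t)
      (Real.exp (x * (t - 1)) * (t - 1)) x :=
    ((hasDerivAt_mul_const (t - 1)).exp).sub_const t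
  refine ((hasDerivAt_const x (1 - t)).div hexp hx).congr_deriv ?_
  simp only [eulerianGenFun]
  field_simp
  ring

theorem hasDerivAt_eulerianGenFun_pow {x : ℝ} (hx : Real.exp (x * (t - 1)) - t ≠ 0) (k : ℕ) :
    HasDerivAt (fun y => eulerianGenFun t y ^ (k + 1))
      ((k + 1) * (1 - t) * eulerianGenFun t x ^ (k + 1)
        + (k + 1) * t * eulerianGenFun t x ^ (k + 2)) x := by
  refine ((hasDerivAt_eulerianGenFun hx).pow (k + 1)).congr_deriv ?_
  push_cast
  ring

theorem contDiffAt_eulerianGenFun_pow (ht : t ≠ 1) (n k : ℕ) :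
    ContDiffAt ℝ n (fun y => eulerianGenFun t y ^ k) 0 := by
  refine ContDiffAt.pow (contDiffAt_const.div ?_ ?_) k
  · fun_prop
  · simpa [sub_eq_zero] using ht.symm

theorem eventually_exp_sub_ne_zero (ht : t ≠ 1) :
    ∀ᶠ x in 𝓝 0, Real.exp (x * (t - 1)) - t ≠ 0 :=
  (by fun_prop : Continuous fun x : ℝ => Real.exp (x * (t - 1)) - t).continuousAt.eventually_ne
    (by simpa [sub_eq_zero] using ht.symm)

theorem higherEulerian_zero_right (ht : t ≠ 1) (m : ℕ) : higherEulerian t m 0 = 1 := by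
  simp [higherEulerian, div_self (sub_ne_zero.mpr ht.symm)]

theorem higherEulerian_succ_succ (ht : t ≠ 1) (m n : ℕ) :
    higherEulerian t (m + 1) (n + 1)
      = (m + 1) * (1 - t) * higherEulerian t (m + 1) n
        + (m + 1) * t * higherEulerian t (m + 2) n := by
  have hderiv : deriv (fun y => eulerianGenFun t y ^ (m + 1)) =ᶠ[𝓝 0]
      fun x => (m + 1) * (1 - t) * eulerianGenFun t x ^ (m + 1)
        + (m + 1) * t * eulerianGenFun t x ^ (m + 2) :=
    (eventually_exp_sub_ne_zero ht).mono fun x hx => (hasDerivAt_eulerianGenFun_pow hx m).deriv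
  change iteratedDeriv (n + 1) (fun y => eulerianGenFun t y ^ (m + 1)) 0 = _
  rw [iteratedDeriv_succ', (hderiv.iteratedDeriv n).eq_of_nhds,
    iteratedDeriv_fun_add (contDiffAt_const.mul (contDiffAt_eulerianGenFun_pow ht n _))
      (contDiffAt_const.mul (contDiffAt_eulerianGenFun_pow ht n _)),
    iteratedDeriv_const_mul_field, iteratedDeriv_const_mul_field]
  rfl

end GeneratingFunction

noncomputable def normalizedHigherEulerian (t : ℝ) (m n : ℕ) : ℝ :=
  ((1 - t) ^ (n + m))⁻¹ * higherEulerian t m n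

section Series

variable {t : ℝ}

theorem normalizedHigherEulerian_succ_succ (ht : t ≠ 1) (m n : ℕ) :
    normalizedHigherEulerian t (m + 1) (n + 1)
      = (m + 1) * (normalizedHigherEulerian t (m + 1) n
        + t * normalizedHigherEulerian t (m + 2) n) := by
  have h1t : (1 : ℝ) - t ≠ 0 := sub_ne_zero.mpr ht.symm
  simp only [normalizedHigherEulerian, higherEulerian_succ_succ ht]
  field_simp
  ring

theorem hasSum_choose_mul_geometric_mul_pow (ht : |t| < 1) (n m : ℕ) :
    HasSum (fun j : ℕ => ((j + m).choose m : ℝ) * t ^ j * ((j : ℝ) + m + 1) ^ n)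
      (normalizedHigherEulerian t (m + 1) n) := by
  have ht1 : t ≠ 1 := (abs_lt.mp ht).2.ne
  induction n generalizing m with
  | zero =>
    simpa [normalizedHigherEulerian, higherEulerian_zero_right ht1, add_comm m 1] using
      hasSum_choose_mul_geometric_of_norm_lt_one m (r := t) (by rwa [Real.norm_eq_abs])
  | succ n ih =>
    have hshift : HasSum
        (fun j : ℕ => ((j + m).choose (m + 1) : ℝ) * t ^ j * ((j : ℝ) + m + 1) ^ n)
        (t * normalizedHigherEulerian t (m + 2) n) := by
      have h := (hasSum_nat_add_iff (f := fun j : ℕ =>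
        ((j + m).choose (m + 1) : ℝ) * t ^ j * ((j : ℝ) + m + 1) ^ n) 1).mp
          (((ih (m + 1)).mul_left t).congr_fun fun j => ?_)
      · simpa using h
      · rw [show j + 1 + m = j + (m + 1) by omega]
        push_cast
        ring
    rw [normalizedHigherEulerian_succ_succ ht1]
    refine (((ih m).add hshift).mul_left ((m : ℝ) + 1)).congr_fun fun j => ?_
    have hpascal : ((j + m + 1 : ℕ) : ℝ) * (j + m).choose m
        = ((j + m).choose m + (j + m).choose (m + 1)) * (m + 1) := by
      exact_mod_cast (Nat.add_one_mul_choose_eq (j + m) m).trans (by rw [Nat.choose_succ_succ'])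
    push_cast at hpascal
    linear_combination t ^ j * ((j : ℝ) + m + 1) ^ n * hpascal

end Series

section Coefficients

variable {t : ℝ}

theorem eulerianCoeff_succ_self (N : ℕ) :
    eulerianCoeff (N + 1) (N + 1) t = (N + 1) * t * eulerianCoeff N N t := by
  simp [eulerianCoeff]

/-- Fails for `k = N + 1`: truncated subtraction makes `eulerianCoeff (N + 1) N t` nonzero. -/
theorem eulerianCoeff_succ_right {k N : ℕ} (hk : k ≤ N) :
    eulerianCoeff k (N + 1) t
      = (k + 1) * eulerianCoeff k N t + k * t * eulerianCoeff (k - 1) N t := by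
  cases k with
  | zero => simp [eulerianCoeff]
  | succ k =>
    simp only [eulerianCoeff]
    rw [show N + 1 - (k + 1) + 1 = (N - (k + 1) + 1) + 1 by omega, sum_range_succ']
    simp only [Nat.sub_zero, Nat.add_sub_cancel, show ∀ j, N + 1 - (j + 1) - 1 = N - j - 1 from
      fun j => by omega, pow_succ', pow_zero, mul_assoc, ← mul_sum]
    push_cast
    ring

theorem sum_eulerianCoeff_mul_of_recurrence {S : ℕ → ℕ → ℝ}
    (hS : ∀ m n, S (m + 1) (n + 1) = (m + 1) * (S (m + 1) n + t * S (m + 2) n)) (N n : ℕ) :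
    ∑ k ∈ range (N + 1), eulerianCoeff k N t * S (k + 1) n = S 1 (n + N) := by
  induction N generalizing n with
  | zero => simp [eulerianCoeff]
  | succ N ih =>
    have hshift : ∑ k ∈ range (N + 1), k * t * eulerianCoeff (k - 1) N t * S (k + 1) n
        + (N + 1) * t * eulerianCoeff N N t * S (N + 2) n
        = ∑ k ∈ range (N + 1), (k + 1) * t * eulerianCoeff k N t * S (k + 2) n := by
      have h := sum_range_succ'
        (fun k : ℕ => (k : ℝ) * t * eulerianCoeff (k - 1) N t * S (k + 1) n) (N + 1)
      rw [sum_range_succ] at h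
      push_cast at h
      simpa [add_assoc] using h
    calc ∑ k ∈ range (N + 2), eulerianCoeff k (N + 1) t * S (k + 1) n
        = ∑ k ∈ range (N + 1), ((k + 1) * eulerianCoeff k N t * S (k + 1) n
            + k * t * eulerianCoeff (k - 1) N t * S (k + 1) n)
          + (N + 1) * t * eulerianCoeff N N t * S (N + 2) n := by
          rw [sum_range_succ, eulerianCoeff_succ_self]
          congr 1
          refine sum_congr rfl fun k hk => ?_
          rw [eulerianCoeff_succ_right (Nat.lt_succ_iff.mp (mem_range.mp hk))]
          ring
      _ = ∑ k ∈ range (N + 1), eulerianCoeff k N t * S (k + 1) (n + 1) := by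
          rw [sum_add_distrib, add_assoc, hshift, ← sum_add_distrib]
          refine sum_congr rfl fun k _ => ?_
          rw [hS]
          ring
      _ = S 1 (n + (N + 1)) := by rw [ih, Nat.add_right_comm, add_assoc]

end Coefficients

theorem eulerian_series_identity (t : ℝ) (ht : |t| < 1) (n N : ℕ) :
    HasSum (fun j : ℕ => t ^ j * ((j : ℝ) + 1) ^ (n + N))
      (((1 - t) ^ n)⁻¹ *
        ∑ i ∈ Finset.Icc 1 (N + 1),
          eulerianCoeff (i - 1) N t * ((1 - t) ^ i)⁻¹ * higherEulerian t i n) := by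
  have hsum : ((1 - t) ^ n)⁻¹ * ∑ i ∈ Finset.Icc 1 (N + 1),
        eulerianCoeff (i - 1) N t * ((1 - t) ^ i)⁻¹ * higherEulerian t i n
      = ∑ k ∈ range (N + 1), eulerianCoeff k N t * normalizedHigherEulerian t (k + 1) n := by
    rw [← Ico_add_one_right_eq_Icc, sum_Ico_eq_sum_range, mul_sum]
    refine sum_congr (by simp) fun k _ => ?_
    simp only [normalizedHigherEulerian, add_comm 1 k, Nat.add_sub_cancel, pow_add, mul_inv]
    ring
  rw [hsum, sum_eulerianCoeff_mul_of_recurrence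
    (normalizedHigherEulerian_succ_succ (abs_lt.mp ht).2.ne)]
  simpa using hasSum_choose_mul_geometric_mul_pow ht (n + N) 0
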